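/- arXiv:1912.05387 — 2 statements merged into one kernel-verified Lean document; each statement's English description precedes it below -/
import Mathlib

section
/- Fix a vector space V over a field K with basis v_1,…,v_m, an associative unital product μ on V with identity v_1 and structure constants γ_{hl}^k, and a function φ : {1,…,m} → ℕ with φ(1) = 0 and φ(k) − φ(h) − φ(l) ≥ 0 whenever γ_{hl}^k ≠ 0. Define μ_0(v_h ⊗ v_l) = Σ_{k : φ(k) = φ(h)+φ(l)} γ_{hl}^k v_k. Then μ_0 is an associative product on V with identity element v_1. -/
/-!
In structure constants, associativity of `μ₀` is the identity
`∑ₖ γ₀(h,l,k) γ₀(k,j,n) = ∑ₖ γ₀(l,j,k) γ₀(h,k,n)` for the truncation `γ₀` of `γ` to the terms with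
`φ k = φ h + φ l`. Both sides vanish unless `φ n = φ h + φ l + φ j`, and in that case the weight
inequality forces every nonzero term `γ(h,l,k) γ(k,j,n)` of the untruncated sum to have
`φ k = φ h + φ l` exactly (similarly on the right), so both sides equal the corresponding sums for
`γ`, which agree by associativity of `μ`. Since `μ (v₁, v_l) = v_l` has weight `φ l = φ 1 + φ l`,
the truncation does not change products with `v₁`.
-/

namespace Module.Basis

variable {ι R M : Type*} [Fintype ι] [CommSemiring R] [AddCommMonoid M] [Module R M]
  (b : Basis ι R M)

noncomputable def structConst (μ : M →ₗ[R] M →ₗ[R] M) (h l k : ι) : R :=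
  b.repr (μ (b h) (b l)) k

variable (μ : M →ₗ[R] M →ₗ[R] M)

theorem apply_basis_eq_sum_structConst (h l : ι) :
    μ (b h) (b l) = ∑ k, b.structConst μ h l k • b k :=
  (b.sum_repr _).symm

theorem repr_apply_apply_basis_left (h l j n : ι) :
    b.repr (μ (μ (b h) (b l)) (b j)) n = ∑ k, b.structConst μ h l k * b.structConst μ k j n := by
  rw [b.apply_basis_eq_sum_structConst μ h l]
  simp only [map_sum, map_smul, LinearMap.sum_apply, LinearMap.smul_apply, Finsupp.coe_finsetSum,
    Finset.sum_apply, Finsupp.coe_smul, Pi.smul_apply, smul_eq_mul, structConst]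

theorem repr_apply_apply_basis_right (h l j n : ι) :
    b.repr (μ (b h) (μ (b l) (b j))) n = ∑ k, b.structConst μ l j k * b.structConst μ h k n := by
  rw [b.apply_basis_eq_sum_structConst μ l j]
  simp only [map_sum, map_smul, Finsupp.coe_finsetSum, Finset.sum_apply, Finsupp.coe_smul,
    Pi.smul_apply, smul_eq_mul, structConst]

theorem assoc_iff_structConst :
    (∀ x y z, μ (μ x y) z = μ x (μ y z)) ↔
      ∀ h l j n, ∑ k, b.structConst μ h l k * b.structConst μ k j n =
        ∑ k, b.structConst μ l j k * b.structConst μ h k n := by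
  refine ⟨fun hassoc h l j n => ?_, fun hc => ?_⟩
  · rw [← repr_apply_apply_basis_left, ← repr_apply_apply_basis_right, hassoc]
  · -- the two sides of associativity, as bilinear maps into `M →ₗ[R] M`
    have hbasis : μ.compr₂ μ = (LinearMap.llcomp R M M M ∘ₗ μ).compl₂ μ :=
      LinearMap.ext_basis b b fun h l => b.ext fun j => b.ext_elem fun n => by
        simpa [repr_apply_apply_basis_left, repr_apply_apply_basis_right] using hc h l j n
    exact fun x y z => LinearMap.congr_fun (LinearMap.congr_fun₂ hbasis x y) z

end Module.Basis

section homogeneousPart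

variable {ι R Γ : Type*}

def homogeneousPart [Zero R] [Add Γ] [DecidableEq Γ] (φ : ι → Γ) (c : ι → ι → ι → R)
    (h l k : ι) : R :=
  if φ k = φ h + φ l then c h l k else 0

theorem ite_mul_ite_of_le [MulZeroClass R] [AddCommMonoid Γ] [PartialOrder Γ]
    [IsOrderedCancelAddMonoid Γ] [DecidableEq Γ] {a w d e : Γ} {x y : R}
    (hx : x ≠ 0 → a ≤ w) (hy : y ≠ 0 → w + d ≤ e) :
    ((if w = a then x else 0) * if e = w + d then y else 0) =
      if e = a + d then x * y else 0 := by
  by_cases hw : w = a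
  · subst hw; simp
  rw [if_neg hw, zero_mul, eq_comm, ite_eq_right_iff]
  intro he
  by_contra hxy
  have hwa : w ≤ a := le_of_add_le_add_right (he ▸ hy (right_ne_zero_of_mul hxy))
  exact hw (le_antisymm hwa (hx (left_ne_zero_of_mul hxy)))

variable {φ : ι → Γ} {c : ι → ι → ι → R}

theorem homogeneousPart_assoc [Fintype ι] [NonUnitalNonAssocSemiring R] [AddCommMonoid Γ]
    [PartialOrder Γ] [IsOrderedCancelAddMonoid Γ] [DecidableEq Γ]
    (hφ : ∀ h l k, c h l k ≠ 0 → φ h + φ l ≤ φ k)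
    (hc : ∀ h l j n, ∑ k, c h l k * c k j n = ∑ k, c l j k * c h k n) (h l j n : ι) :
    ∑ k, homogeneousPart φ c h l k * homogeneousPart φ c k j n =
      ∑ k, homogeneousPart φ c l j k * homogeneousPart φ c h k n := by
  have hleft (k : ι) : homogeneousPart φ c h l k * homogeneousPart φ c k j n =
      if φ n = φ h + φ l + φ j then c h l k * c k j n else 0 :=
    ite_mul_ite_of_le (hφ h l k) (hφ k j n)
  have hright (k : ι) : homogeneousPart φ c l j k * homogeneousPart φ c h k n =
      if φ n = φ h + φ l + φ j then c l j k * c h k n else 0 := by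
    rw [add_rotate]
    unfold homogeneousPart
    rw [add_comm (φ h) (φ k)]
    exact ite_mul_ite_of_le (hφ l j k) fun hy => add_comm (φ h) (φ k) ▸ hφ h k n hy
  simp only [hleft, hright, Finset.sum_ite_irrel, Finset.sum_const_zero, hc]

theorem homogeneousPart_eq_self [Zero R] [Add Γ] [DecidableEq Γ] {h l : ι}
    (hc : ∀ k, c h l k ≠ 0 → φ k = φ h + φ l) :
    homogeneousPart φ c h l = c h l := by
  funext k
  by_cases hk : c h l k = 0
  · simp [homogeneousPart, hk]
  · exact if_pos (hc k hk)

end homogeneousPart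

/-- Degeneration of an associative product.  `V` is a vector space with basis
`v_1, …, v_m` (indexed by `Fin (m+1)`, with `v_1 = b 0`), `μ` an associative
bilinear product with identity `b 0` and structure constants `γ`, and
`φ` a weight function with `φ 0 = 0` and `φ k ≥ φ h + φ l` whenever `γ h l k ≠ 0`.
Then the degenerate product `μ₀ (v_h, v_l) = ∑_{k : φ k = φ h + φ l} γ h l k • v_k`
is associative with identity element `b 0`. -/
theorem stmt11 (K V : Type*) [Field K] [AddCommGroup V] [Module K V] (m : ℕ)
    (b : Module.Basis (Fin (m + 1)) K V)
    (μ : V →ₗ[K] V →ₗ[K] V)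
    (hassoc : ∀ x y z, μ (μ x y) z = μ x (μ y z))
    (hone : ∀ x, μ (b 0) x = x ∧ μ x (b 0) = x)
    (γ : Fin (m + 1) → Fin (m + 1) → Fin (m + 1) → K)
    (hγ : ∀ h l k, γ h l k = b.repr (μ (b h) (b l)) k)
    (φ : Fin (m + 1) → ℕ) (hφ0 : φ 0 = 0)
    (hφ : ∀ h l k, γ h l k ≠ 0 → φ h + φ l ≤ φ k)
    (μ₀ : V →ₗ[K] V →ₗ[K] V)
    (hμ₀ : ∀ h l, μ₀ (b h) (b l) =
      ∑ k ∈ Finset.univ.filter (fun k => φ k = φ h + φ l), γ h l k • b k) :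
    (∀ x y z, μ₀ (μ₀ x y) z = μ₀ x (μ₀ y z)) ∧ (∀ x, μ₀ (b 0) x = x ∧ μ₀ x (b 0) = x) := by
  have hγμ : b.structConst μ = γ := by
    funext h l k
    exact (hγ h l k).symm
  have hγμ₀ : b.structConst μ₀ = homogeneousPart φ γ := by
    funext h l k
    rw [Module.Basis.structConst, hμ₀, Finset.sum_filter]
    simp only [← ite_zero_smul]
    exact congrFun (b.repr_sum_self _) k
  have hunit (l : Fin (m + 1)) :
      b.structConst μ₀ 0 l = b.structConst μ 0 l ∧ b.structConst μ₀ l 0 = b.structConst μ l 0 := by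
    rw [hγμ₀, hγμ]
    constructor <;> refine homogeneousPart_eq_self fun k hk => ?_
    · rw [hγ, (hone _).1, b.repr_self, Finsupp.single_apply_ne_zero] at hk
      simp [hk.1, hφ0]
    · rw [hγ, (hone _).2, b.repr_self, Finsupp.single_apply_ne_zero] at hk
      simp [hk.1, hφ0]
  refine ⟨(b.assoc_iff_structConst μ₀).2 ?_, fun x => ⟨?_, ?_⟩⟩
  · rw [hγμ₀]
    exact homogeneousPart_assoc hφ (hγμ ▸ (b.assoc_iff_structConst μ).1 hassoc)
  · have hleft : μ₀ (b 0) = μ (b 0) := b.ext fun l => by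
      rw [b.apply_basis_eq_sum_structConst, b.apply_basis_eq_sum_structConst, (hunit l).1]
    rw [hleft, (hone x).1]
  · have hright : μ₀.flip (b 0) = μ.flip (b 0) := b.ext fun l => by
      simp only [LinearMap.flip_apply]
      rw [b.apply_basis_eq_sum_structConst, b.apply_basis_eq_sum_structConst, (hunit l).2]
    exact (LinearMap.congr_fun hright x).trans (hone x).2
end

section
/- The poset P (the 33-element poset Γ_M from the Auslander–Reiten quiver of S⁺(2,4) in characteristic 3) contains no full subposet isomorphic to the disjoint union (2,2,3) of two 2-chains and a 3-chain that is pairwise incomparable between the components. -/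
def cov : List (Fin 33 × Fin 33) :=
  [(0,1),
   (1,2),(1,3),
   (2,4),(2,5),
   (3,5),(3,6),
   (4,7),(4,8),
   (5,8),(5,9),
   (6,9),
   (7,10),(7,11),
   (8,11),(8,12),
   (9,12),
   (10,13),(10,14),
   (11,14),(11,15),
   (12,15),(12,16),
   (13,17),
   (14,17),(14,18),
   (15,18),(15,19),
   (16,19),
   (18,20),
   (19,20),(19,21),
   (20,22),
   (21,22),(21,23),
   (22,24),(22,25),
   (23,25),
   (24,26),
   (25,26),
   (26,27),(27,28),(28,29),(29,30),(30,31),(31,32)]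

def ple (a b : Fin 33) : Prop :=
  Relation.ReflTransGen (fun x y => (x, y) ∈ cov) a b

def plt (a b : Fin 33) : Prop := ple a b ∧ a ≠ b

def incomp (a b : Fin 33) : Prop := ¬ ple a b ∧ ¬ ple b a

def mask : Nat := 3316158518766054662851735156791621390096841028266509484376389077400011534270418513639832568310586894428487310718241250645549421451196698833392109045349367625901872864274140251151954350627388833858967782788929436773405269439304805387178654842479693037922787690514968722500460262165063263091328289539588899933022753206736395436031

def leT (a b : Fin 33) : Bool := mask.testBit (a.val * 33 + b.val)

def nexts (x : Fin 33) : List (Fin 33) :=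
  cov.filterMap (fun p => if p.1 = x then some p.2 else none)

def reach : Nat → Fin 33 → List (Fin 33)
  | 0, a => [a]
  | n+1, a => ((reach n a).flatMap (fun x => x :: nexts x)).dedup

lemma ple_of_mem_reach : ∀ n (a b : Fin 33), b ∈ reach n a → ple a b := by
  intro n
  induction n with
  | zero => intro a b h; simp [reach] at h; subst h; exact Relation.ReflTransGen.refl
  | succ n ih =>
    intro a b h
    simp only [reach, List.mem_dedup, List.mem_flatMap] at h
    obtain ⟨x, hx, hb⟩ := h
    rcases List.mem_cons.mp hb with rfl | hb
    · exact ih a b hx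
    · have : (x, b) ∈ cov := by
        simp only [nexts, List.mem_filterMap] at hb
        obtain ⟨p, hp, hpe⟩ := hb
        split at hpe
        · next heq => cases hpe; subst heq; rw [Prod.mk.eta]; exact hp
        · exact absurd hpe (by simp)
      exact Relation.ReflTransGen.tail (ih a x hx) this

set_option maxRecDepth 40000 in
lemma reach_of_leT : ∀ a : Fin 33, (List.finRange 33).all
    (fun b => !leT a b || decide (b ∈ reach 18 a)) = true := by decide

lemma ple_of_leT {a b : Fin 33} (h : leT a b = true) : ple a b := by
  have := List.all_eq_true.mp (reach_of_leT a) b (List.mem_finRange b)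
  rw [h] at this
  simp at this
  exact ple_of_mem_reach 18 a b this

lemma leT_refl : ∀ a : Fin 33, leT a a = true := by decide

lemma leT_step : ∀ a : Fin 33, cov.all (fun p => !leT a p.1 || leT a p.2) = true := by decide

lemma leT_of_ple {a b : Fin 33} (h : ple a b) : leT a b = true := by
  induction h with
  | refl => exact leT_refl a
  | tail _ hmem ih =>
    have := List.all_eq_true.mp (leT_step a) _ hmem
    rw [ih] at this; simpa using this

theorem test : True := trivial

def imask : Nat := 107526197082026462837893682779068487257399165906359611513949114238947427581424289518882386951405898512034993729652601335358130915634574904810000510568858313187764632306161222806484415883794413053918171698569881997474427245610548036298646211608439713679046591517946672532391489254881140866169667344955624192071733881077760000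

def ltT (a b : Fin 33) : Bool := leT a b && !(a == b)
def incT (a b : Fin 33) : Bool := imask.testBit (a.val * 33 + b.val)

lemma incT_eq : ∀ a b : Fin 33, incT a b = (!leT a b && !leT b a) := by decide

def elems : List (Fin 33) := List.finRange 33

def check : Bool :=
  elems.all fun a1 =>
    (elems.filter fun t => incT a1 t).all fun b1 =>
      ((elems.filter fun t => incT a1 t).filter fun t => incT b1 t).all fun c1 =>
        (elems.filter fun t => ltT a1 t && incT b1 t && incT c1 t).all fun a2 =>
          (elems.filter fun t => ltT b1 t && incT a1 t && incT a2 t && incT c1 t).all fun b2 =>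
            (elems.filter fun t =>
                ltT c1 t && incT a1 t && incT a2 t && incT b1 t && incT b2 t).all fun c2 =>
              (elems.filter fun t =>
                  ltT c2 t && incT a1 t && incT a2 t && incT b1 t && incT b2 t).all fun _ =>
                false

set_option maxRecDepth 100000 in
set_option maxHeartbeats 1000000 in
lemma check_true : check = true := by decide

lemma key (a₁ a₂ b₁ b₂ c₁ c₂ c₃ : Fin 33)
    (ha : ltT a₁ a₂ = true) (hb : ltT b₁ b₂ = true) (hc : ltT c₁ c₂ = true)
    (hc3 : ltT c₂ c₃ = true)
    (iab1 : incT a₁ b₁ = true) (iab2 : incT a₁ b₂ = true)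
    (ia2b1 : incT a₂ b₁ = true) (ia2b2 : incT a₂ b₂ = true)
    (iac1 : incT a₁ c₁ = true) (iac2 : incT a₁ c₂ = true) (iac3 : incT a₁ c₃ = true)
    (ia2c1 : incT a₂ c₁ = true) (ia2c2 : incT a₂ c₂ = true) (ia2c3 : incT a₂ c₃ = true)
    (ibc1 : incT b₁ c₁ = true) (ibc2 : incT b₁ c₂ = true) (ibc3 : incT b₁ c₃ = true)
    (ib2c1 : incT b₂ c₁ = true) (ib2c2 : incT b₂ c₂ = true) (ib2c3 : incT b₂ c₃ = true)
    (isym : ∀ x y : Fin 33, incT x y = true → incT y x = true) : False := by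
  have h1 := List.all_eq_true.mp check_true a₁ (List.mem_finRange a₁)
  have h2 := List.all_eq_true.mp h1 b₁
    (List.mem_filter.mpr ⟨List.mem_finRange b₁, iab1⟩)
  have h3 := List.all_eq_true.mp h2 c₁
    (List.mem_filter.mpr ⟨List.mem_filter.mpr ⟨List.mem_finRange c₁, iac1⟩, ibc1⟩)
  have h4 := List.all_eq_true.mp h3 a₂
    (List.mem_filter.mpr ⟨List.mem_finRange a₂, by
      rw [ha, isym _ _ ia2b1, isym _ _ ia2c1]; rfl⟩)
  have h5 := List.all_eq_true.mp h4 b₂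
    (List.mem_filter.mpr ⟨List.mem_finRange b₂, by
      rw [hb, iab2, ia2b2, isym _ _ ib2c1]; rfl⟩)
  have h6 := List.all_eq_true.mp h5 c₂
    (List.mem_filter.mpr ⟨List.mem_finRange c₂, by
      rw [hc, iac2, ia2c2, ibc2, ib2c2]; rfl⟩)
  have h7 := List.all_eq_true.mp h6 c₃
    (List.mem_filter.mpr ⟨List.mem_finRange c₃, by
      rw [hc3, iac3, ia2c3, ibc3, ib2c3]; rfl⟩)
  exact absurd h7 (by simp)

lemma incT_symm : ∀ x y : Fin 33, incT x y = true → incT y x = true := by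
  intro x y h
  rw [incT_eq] at h ⊢
  rw [Bool.and_comm]
  exact h

/-- The 33-element poset `Γ_M` contains no full subposet isomorphic to the disjoint
union `(2,2,3)` of two 2-chains and a 3-chain: there are no chains
`a₁ < a₂`, `b₁ < b₂`, `c₁ < c₂ < c₃` with every element of one chain incomparable
to every element of the other chains. -/
theorem stmt15 :
    ¬ ∃ a₁ a₂ b₁ b₂ c₁ c₂ c₃ : Fin 33,
        plt a₁ a₂ ∧ plt b₁ b₂ ∧ plt c₁ c₂ ∧ plt c₂ c₃ ∧
        (∀ x ∈ ({a₁, a₂} : Set (Fin 33)), ∀ y ∈ ({b₁, b₂} : Set (Fin 33)), incomp x y) ∧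
        (∀ x ∈ ({a₁, a₂} : Set (Fin 33)), ∀ y ∈ ({c₁, c₂, c₃} : Set (Fin 33)), incomp x y) ∧
        (∀ x ∈ ({b₁, b₂} : Set (Fin 33)), ∀ y ∈ ({c₁, c₂, c₃} : Set (Fin 33)), incomp x y) := by
  rintro ⟨a₁, a₂, b₁, b₂, c₁, c₂, c₃, ha, hb, hc, hc3, hab, hac, hbc⟩
  have toLt : ∀ {x y : Fin 33}, plt x y → ltT x y = true := by
    rintro x y ⟨h1, h2⟩
    simp [ltT, leT_of_ple h1, h2]
  have toInc : ∀ {x y : Fin 33}, incomp x y → incT x y = true := by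
    rintro x y ⟨h1, h2⟩
    rw [incT_eq]
    simp only [Bool.and_eq_true, Bool.not_eq_true']
    constructor
    · by_contra h; simp only [Bool.not_eq_false] at h; exact h1 (ple_of_leT h)
    · by_contra h; simp only [Bool.not_eq_false] at h; exact h2 (ple_of_leT h)
  exact key a₁ a₂ b₁ b₂ c₁ c₂ c₃ (toLt ha) (toLt hb) (toLt hc) (toLt hc3)
    (toInc (hab a₁ (by simp) b₁ (by simp))) (toInc (hab a₁ (by simp) b₂ (by simp)))
    (toInc (hab a₂ (by simp) b₁ (by simp))) (toInc (hab a₂ (by simp) b₂ (by simp)))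
    (toInc (hac a₁ (by simp) c₁ (by simp))) (toInc (hac a₁ (by simp) c₂ (by simp)))
    (toInc (hac a₁ (by simp) c₃ (by simp)))
    (toInc (hac a₂ (by simp) c₁ (by simp))) (toInc (hac a₂ (by simp) c₂ (by simp)))
    (toInc (hac a₂ (by simp) c₃ (by simp)))
    (toInc (hbc b₁ (by simp) c₁ (by simp))) (toInc (hbc b₁ (by simp) c₂ (by simp)))
    (toInc (hbc b₁ (by simp) c₃ (by simp)))
    (toInc (hbc b₂ (by simp) c₁ (by simp))) (toInc (hbc b₂ (by simp) c₂ (by simp)))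
    (toInc (hbc b₂ (by simp) c₃ (by simp)))
    incT_symm
end
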